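/- arXiv:2310.01167 — 4 statements merged into one kernel-verified Lean document; each statement's English description precedes it below -/
import Mathlib

section
/- In the localized twisted group algebra Q_W, the set {X_w}_{w∈W} of divided-difference elements forms a Q-basis of Q_W; in particular the elements {X_w} are linearly independent over S. -/
/-!
Write `X_w` in the basis `{δ_v}`. Left multiplication by `X_i = α_i⁻¹ (1 - δ_{s_i})` replaces the
coefficient at `v` by `α_i⁻¹ (c_v - s_i(c_{s_i v}))`, so by induction along a reduced word
`X_w` is supported on `w` and on elements shorter than `w`; for `w = s_i w'` reduced, its
coefficient at `w` is `-α_i⁻¹ s_i(c)` with `c` the coefficient of `X_{w'}` at `w'`, hence a unit.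
A transition matrix that is triangular for the length with unit
diagonal is invertible, whence `{X_w}` is a basis.
-/

open Submodule

namespace Module.Basis

variable {ι R M : Type*} [Ring R] [AddCommGroup M] [Module R M] (b : Basis ι R M) (ℓ : ι → ℕ)
  {v : ι → M}

theorem linearIndependent_of_repr_triangular
    (htri : ∀ i j, b.repr (v i) j ≠ 0 → j = i ∨ ℓ j < ℓ i)
    (hdiag : ∀ i, IsUnit (b.repr (v i) i)) : LinearIndependent R v := by
  classical
  rw [linearIndependent_iff']
  intro s g hg
  by_contra! hne
  obtain ⟨i, hi, hgi⟩ := hne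
  obtain ⟨m, hm, hmax⟩ :=
    Finset.exists_max_image (s.filter (g · ≠ 0)) ℓ ⟨i, Finset.mem_filter.2 ⟨hi, hgi⟩⟩
  rw [Finset.mem_filter] at hm
  have hcoeff : ∑ j ∈ s, g j * b.repr (v j) m = g m * b.repr (v m) m := by
    refine Finset.sum_eq_single_of_mem m hm.1 fun j hj hjm => ?_
    by_contra h
    rcases htri j m (right_ne_zero_of_mul h) with rfl | hlt
    · exact hjm rfl
    · exact (hmax j (Finset.mem_filter.2 ⟨hj, left_ne_zero_of_mul h⟩)).not_gt hlt
  have hzero : ∑ j ∈ s, g j * b.repr (v j) m = 0 := by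
    simpa using congrArg (fun x => b.repr x m) hg
  exact hm.2 ((hdiag m).mul_left_eq_zero.1 (hcoeff ▸ hzero))

theorem span_eq_top_of_repr_triangular
    (htri : ∀ i j, b.repr (v i) j ≠ 0 → j = i ∨ ℓ j < ℓ i)
    (hdiag : ∀ i, IsUnit (b.repr (v i) i)) : span R (Set.range v) = ⊤ := by
  classical
  refine eq_top_iff.2 (b.span_eq ▸ span_le.2 ?_)
  rintro _ ⟨i, rfl⟩
  induction hn : ℓ i using Nat.strong_induction_on generalizing i with
  | _ n ih =>
  set d := b.repr (v i) i
  have hrest : v i - d • b i ∈ span R (Set.range v) := by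
    refine span_le.2 ?_ (b.mem_span_repr_support _)
    rintro _ ⟨j, hj, rfl⟩
    have hj : b.repr (v i) j - Finsupp.single i d j ≠ 0 := by simpa using hj
    obtain rfl | hji := eq_or_ne j i
    · simp [d] at hj
    · have hlt := (htri i j (by simpa [Finsupp.single_apply, hji.symm] using hj)).resolve_left hji
      exact ih _ (hn ▸ hlt) j rfl
  have hd : d • b i ∈ span R (Set.range v) := by
    simpa using sub_mem (subset_span (Set.mem_range_self i)) hrest
  have := smul_mem _ (↑(hdiag i).unit⁻¹ : R) hd
  rwa [smul_smul, (hdiag i).val_inv_mul, one_smul] at this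

end Module.Basis

section TwistedGroupAlgebra

variable {W Q A : Type*} [Group W] [CommRing Q] [Ring A] [Module Q A]
  {act : W →* RingAut Q} {ι : Q →+* A} {δ : W →* A} {bδ : Module.Basis W Q A}

theorem repr_delta_mul (hsmul : ∀ (q : Q) (a : A), q • a = ι q * a)
    (hδι : ∀ (w : W) (q : Q), δ w * ι q = ι (act w q) * δ w) (hbδ : ∀ w, (bδ w : A) = δ w)
    (s : W) (x : A) (v : W) : bδ.repr (δ s * x) v = act s (bδ.repr x (s⁻¹ * v)) := by
  classical
  have hx : x ∈ span Q (Set.range bδ) := bδ.span_eq ▸ mem_top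
  induction hx using span_induction with
  | mem _ hu =>
    obtain ⟨u, rfl⟩ := hu
    rw [hbδ, ← map_mul, ← hbδ, ← hbδ, bδ.repr_self, bδ.repr_self, Finsupp.single_apply,
      Finsupp.single_apply, eq_inv_mul_iff_mul_eq]
    split_ifs <;> simp
  | zero => simp
  | add x y _ _ hx hy => simp [mul_add, hx, hy]
  | smul q x _ hx =>
    rw [hsmul, ← mul_assoc, hδι, mul_assoc, ← hsmul, ← hsmul]
    simp [hx]


variable {B : Type*} {M : CoxeterMatrix B} (cs : CoxeterSystem M W)

noncomputable def divDiff (ι : Q →+* A) (δ : W →* A) (α : B → Q) (i : B) : A :=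
  ι (Ring.inverse (α i)) * (δ 1 - δ (cs.simple i))

variable {α : B → Q}

theorem repr_divDiff_mul (hsmul : ∀ (q : Q) (a : A), q • a = ι q * a)
    (hδι : ∀ (w : W) (q : Q), δ w * ι q = ι (act w q) * δ w) (hbδ : ∀ w, (bδ w : A) = δ w)
    (i : B) (x : A) (v : W) :
    bδ.repr (divDiff cs ι δ α i * x) v =
      Ring.inverse (α i) * (bδ.repr x v - act (cs.simple i) (bδ.repr x (cs.simple i * v))) := by
  rw [divDiff, map_one, mul_assoc, sub_mul, one_mul, ← hsmul, map_smul, Finsupp.smul_apply,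
    map_sub, Finsupp.sub_apply, repr_delta_mul hsmul hδι hbδ, cs.inv_simple, smul_eq_mul]

theorem repr_prod_divDiff_ne_zero (hsmul : ∀ (q : Q) (a : A), q • a = ι q * a)
    (hδι : ∀ (w : W) (q : Q), δ w * ι q = ι (act w q) * δ w) (hbδ : ∀ w, (bδ w : A) = δ w)
    (l : List B) (v : W) (hv : bδ.repr (l.map (divDiff cs ι δ α)).prod v ≠ 0) :
    v = cs.wordProd l ∨ cs.length v < l.length := by
  induction l generalizing v with
  | nil =>
    left
    rw [cs.wordProd_nil]
    by_contra h
    exact hv (by simp [← map_one δ, ← hbδ, Ne.symm h])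
  | cons i l ih =>
    rw [List.map_cons, List.prod_cons, repr_divDiff_mul cs hsmul hδι hbδ] at hv
    have hl := cs.length_wordProd_le l
    have hsv := cs.length_simple_mul v i
    by_cases h : bδ.repr (l.map (divDiff cs ι δ α)).prod v = 0
    · have h' : bδ.repr (l.map (divDiff cs ι δ α)).prod (cs.simple i * v) ≠ 0 := by
        intro h'; simp [h, h'] at hv
      rcases ih _ h' with heq | hlt
      · left
        rw [cs.wordProd_cons, ← heq, cs.simple_mul_simple_cancel_left]
      · right; simp only [List.length_cons]; omega
    · right
      rcases ih v h with rfl | hlt <;> simp only [List.length_cons] <;> omega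

theorem isUnit_repr_prod_divDiff (hsmul : ∀ (q : Q) (a : A), q • a = ι q * a)
    (hδι : ∀ (w : W) (q : Q), δ w * ι q = ι (act w q) * δ w) (hbδ : ∀ w, (bδ w : A) = δ w)
    (hα : ∀ i, IsUnit (α i)) {l : List B} (hl : cs.IsReduced l) :
    IsUnit (bδ.repr (l.map (divDiff cs ι δ α)).prod (cs.wordProd l)) := by
  induction l with
  | nil => simp [← map_one δ, ← hbδ]
  | cons i l ih =>
    have hl' : cs.IsReduced l := by simpa using hl.drop 1
    have hoff : bδ.repr (l.map (divDiff cs ι δ α)).prod (cs.wordProd (i :: l)) = 0 := by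
      by_contra hne
      have hlen := hl.eq
      rw [List.length_cons] at hlen
      rcases repr_prod_divDiff_ne_zero cs hsmul hδι hbδ l _ hne with heq | hlt
      · rw [heq, hl'.eq] at hlen; omega
      · omega
    rw [List.map_cons, List.prod_cons, repr_divDiff_mul cs hsmul hδι hbδ, hoff, cs.wordProd_cons,
      cs.simple_mul_simple_cancel_left, zero_sub, mul_neg]
    exact ((isUnit_ringInverse.2 (hα i)).mul ((ih hl').map (act (cs.simple i)))).neg

end TwistedGroupAlgebra

/-- In the localized twisted group algebra `Q_W` (a ring `A`, free
as a left `Q`-module with basis the group elements `δ w`), the divided-difference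
elements `X w` (defined from any reduced word by
`X_w = X_{i_1} ⋯ X_{i_r}` with `X_i = (1/α_i)(δ_e − δ_{s_i})`) form a `Q`-basis
of `Q_W`; in particular the family `{X w}` is linearly independent over the
subring `S ⊆ Q`. -/
theorem divided_difference_elements_form_basis
    {B W : Type*} [Group W] [Fintype W] {M : CoxeterMatrix B} (cs : CoxeterSystem M W)
    {Q : Type*} [CommRing Q]
    (act : W →* RingAut Q)
    (αQ : B → Q) (hα : ∀ i, IsUnit (αQ i))
    {A : Type*} [Ring A] [Module Q A]
    (ι : Q →+* A) (δ : W →* A)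
    (hsmul : ∀ (q : Q) (a : A), q • a = ι q * a)
    (hδι : ∀ (w : W) (q : Q), δ w * ι q = ι (act w q) * δ w)
    (bδ : Module.Basis W Q A) (hbδ : ∀ w, (bδ w : A) = δ w)
    (X : W → A)
    (hX : ∀ l : List B, cs.IsReduced l →
      X (cs.wordProd l) =
        (l.map (fun i => ι (Ring.inverse (αQ i)) * (δ 1 - δ (cs.simple i)))).prod)
    -- a subring `S` of `Q` (e.g. the symmetric algebra inside its localization)
    (S : Type*) [CommRing S] (ιS : S →+* Q) (hιS : Function.Injective ιS) :
    (LinearIndependent Q X ∧ Submodule.span Q (Set.range X) = ⊤) ∧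
    (∀ c : W → S, ∑ w : W, ιS (c w) • X w = 0 → ∀ w, c w = 0) := by
  have htri : ∀ w v, bδ.repr (X w) v ≠ 0 → v = w ∨ cs.length v < cs.length w := by
    intro w v
    obtain ⟨l, hl, rfl⟩ := cs.exists_isReduced w
    rw [hX l hl, hl.eq]
    exact repr_prod_divDiff_ne_zero cs hsmul hδι hbδ l v
  have hdiag : ∀ w, IsUnit (bδ.repr (X w) w) := by
    intro w
    obtain ⟨l, hl, rfl⟩ := cs.exists_isReduced w
    rw [hX l hl]
    exact isUnit_repr_prod_divDiff cs hsmul hδι hbδ hα hl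
  have hli := bδ.linearIndependent_of_repr_triangular cs.length htri hdiag
  refine ⟨⟨hli, bδ.span_eq_top_of_repr_triangular cs.length htri hdiag⟩, fun c hc w => hιS ?_⟩
  rw [map_zero]
  exact Fintype.linearIndependent_iff.1 hli (fun w => ιS (c w)) hc w
end

section
/- For a reduced word w = s_{i_1}···s_{i_r}, the coefficient c_{w,v} in Y_w = Σ_v c_{w,v} δ_v equals (−1)^{ℓ(w)−ℓ(v)} times the sum, over all subsequences (j_1,...,j_s) of (i_1,...,i_r) with s_{j_1}···s_{j_s} = v (not necessarily reduced), of the product ∏_{k} β_{k,𝐣}^{-1}, where β_{k,𝐣} is the image of α_{i_k} under the product of the simple reflections from the subsequence appearing strictly before position k. -/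
/-!
Expand `∏ₖ ι(α_{i_k}⁻¹) (δ_{s_{i_k}} - δ_e)` by distributivity: a term picks `δ_{s_{i_k}}` at the
positions `k` of a subset `E` and `-δ_e` elsewhere. Moving each coefficient to the left through
the `δ`'s picked before it, via `δ_u q = u(q) δ_u`, turns `α_{i_k}⁻¹` into `β_{k,E}⁻¹`, so the term
is `(-1)^(r - |E|) ∏ₖ β_{k,E}⁻¹ δ_{v_E}`. As the word is reduced, `r = ℓ(w)`, and since the length
is additive mod 2, `|E| ≡ ℓ(v_E)`, which turns the sign into `(-1)^(ℓ(w) - ℓ(v))`.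
-/

theorem RingEquiv.map_ringInverse {R S : Type*} [Semiring R] [Semiring S] (e : R ≃+* S) (x : R) :
    e (Ring.inverse x) = Ring.inverse (e x) := by
  by_cases hx : IsUnit x
  · calc e (Ring.inverse x) = Ring.inverse (e x) * (e x * e (Ring.inverse x)) :=
          (Ring.inverse_mul_cancel_left _ _ (hx.map e)).symm
      _ = Ring.inverse (e x) := by rw [← map_mul, Ring.mul_inverse_cancel x hx, map_one, mul_one]
  · rw [Ring.inverse_non_unit x hx, Ring.inverse_non_unit _ (mt (isUnit_map_iff e x).mp hx),
      map_zero]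

namespace Finset

theorem sum_powerset_map {α β M : Type*} [AddCommMonoid M] (e : α ↪ β) (s : Finset α)
    (f : Finset β → M) : ∑ t ∈ (s.map e).powerset, f t = ∑ u ∈ s.powerset, f (u.map e) := by
  have : (s.map e).powerset = s.powerset.map (mapEmbedding e).toEmbedding := by
    ext t
    simp [subset_map_iff, eq_comm]
  rw [this, sum_map]
  rfl

theorem sum_univ_finset_fin_succ {n : ℕ} {M : Type*} [AddCommMonoid M]
    (f : Finset (Fin (n + 1)) → M) :
    ∑ t, f t = ∑ u : Finset (Fin n),
      (f (insert 0 (u.map (Fin.succEmb n))) + f (u.map (Fin.succEmb n))) := by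
  rw [← powerset_univ, Fin.univ_succ, cons_eq_insert, sum_powerset_insert (by simp), add_comm,
    ← sum_add_distrib, sum_powerset_map, powerset_univ]
  rfl

theorem filter_map_succEmb_lt_succ {n : ℕ} (E : Finset (Fin n)) (k : Fin n) :
    (E.map (Fin.succEmb n)).filter (· < k.succ) = (E.filter (· < k)).map (Fin.succEmb n) := by
  simp [filter_map, Function.comp_def]

theorem filter_insert_zero_map_succEmb_lt_succ {n : ℕ} (E : Finset (Fin n)) (k : Fin n) :
    (insert 0 (E.map (Fin.succEmb n))).filter (· < k.succ) =
      insert 0 ((E.filter (· < k)).map (Fin.succEmb n)) := by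
  rw [filter_insert, if_pos k.succ_pos, filter_map_succEmb_lt_succ]

section SortedProd

variable {M : Type*} [Monoid M]

def sortedProd {n : ℕ} (E : Finset (Fin n)) (g : Fin n → M) : M :=
  ((E.sort (· ≤ ·)).map g).prod

@[simp]
theorem sortedProd_empty {n : ℕ} (g : Fin n → M) : (∅ : Finset (Fin n)).sortedProd g = 1 := by
  simp [sortedProd]

theorem sortedProd_map_succEmb {n : ℕ} (E : Finset (Fin n)) (g : Fin (n + 1) → M) :
    (E.map (Fin.succEmb n)).sortedProd g = E.sortedProd (fun k => g k.succ) := by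
  rw [sortedProd, ← map_sort _ _ _ _ fun _ _ _ _ => Fin.succ_le_succ_iff.symm, List.map_map]
  rfl

theorem sortedProd_insert_zero_map_succEmb {n : ℕ} (E : Finset (Fin n)) (g : Fin (n + 1) → M) :
    (insert 0 (E.map (Fin.succEmb n))).sortedProd g = g 0 * E.sortedProd (fun k => g k.succ) := by
  rw [sortedProd, sort_insert _ (fun b _ => Fin.zero_le b) (by simp), List.map_cons,
    List.prod_cons, ← sortedProd, sortedProd_map_succEmb]

end SortedProd

end Finset

section TwistedGroupAlgebra

variable {W Q A : Type*} [Monoid W] [CommRing Q] [Ring A] (act : W →* RingAut Q)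

/-- With `g k = s_{i_k}` and `y k = α_{i_k}⁻¹` this is `∏ₖ β_{k,E}⁻¹`. -/
def subsetWeight {n : ℕ} (g : Fin n → W) (y : Fin n → Q) (E : Finset (Fin n)) : Q :=
  ∏ k, act ((E.filter (· < k)).sortedProd g) (y k)

theorem subsetWeight_map_succEmb {n : ℕ} (g : Fin (n + 1) → W) (y : Fin (n + 1) → Q)
    (E : Finset (Fin n)) :
    subsetWeight act g y (E.map (Fin.succEmb n)) =
      y 0 * subsetWeight act (fun k => g k.succ) (fun k => y k.succ) E := by
  simp [subsetWeight, Fin.prod_univ_succ, Finset.filter_map_succEmb_lt_succ,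
    Finset.sortedProd_map_succEmb]

theorem subsetWeight_insert_zero_map_succEmb {n : ℕ} (g : Fin (n + 1) → W) (y : Fin (n + 1) → Q)
    (E : Finset (Fin n)) :
    subsetWeight act g y (insert 0 (E.map (Fin.succEmb n))) =
      y 0 * act (g 0) (subsetWeight act (fun k => g k.succ) (fun k => y k.succ) E) := by
  simp [subsetWeight, Fin.prod_univ_succ, Finset.filter_insert_zero_map_succEmb_lt_succ,
    Finset.sortedProd_insert_zero_map_succEmb, map_prod]

variable {act} (ι : Q →+* A) (δ : W →* A)

theorem mul_delta_sub_one_mul (hδι : ∀ (w : W) (q : Q), δ w * ι q = ι (act w q) * δ w)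
    (a c : Q) (g u : W) :
    ι a * (δ g - δ 1) * (ι c * δ u) = ι (a * act g c) * δ (g * u) - ι (a * c) * δ u := by
  calc ι a * (δ g - δ 1) * (ι c * δ u) = ι a * (δ g * ι c) * δ u - ι a * ι c * δ u := by
        rw [map_one]; noncomm_ring
    _ = _ := by rw [hδι, map_mul ι, map_mul ι, map_mul δ]; noncomm_ring

theorem list_prod_ofFn_eq_sum_subsetWeight
    (hδι : ∀ (w : W) (q : Q), δ w * ι q = ι (act w q) * δ w) :
    ∀ {n : ℕ} (g : Fin n → W) (y : Fin n → Q),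
      (List.ofFn fun k => ι (y k) * (δ (g k) - δ 1)).prod =
        ∑ E : Finset (Fin n),
          ι ((-1) ^ (n - E.card) * subsetWeight act g y E) * δ (E.sortedProd g)
  | 0, g, y => by
    rw [← Finset.powerset_univ, Finset.univ_eq_empty, Finset.powerset_empty]
    simp [subsetWeight]
  | n + 1, g, y => by
    rw [List.ofFn_succ, List.prod_cons, list_prod_ofFn_eq_sum_subsetWeight hδι, Finset.mul_sum,
      Finset.sum_univ_finset_fin_succ]
    refine Finset.sum_congr rfl fun E _ => ?_
    have hE : E.card ≤ n := (Finset.card_le_univ E).trans_eq (Fintype.card_fin n)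
    rw [mul_delta_sub_one_mul ι δ hδι, subsetWeight_insert_zero_map_succEmb,
      subsetWeight_map_succEmb, Finset.sortedProd_insert_zero_map_succEmb,
      Finset.sortedProd_map_succEmb, Finset.card_insert_of_notMem (by simp), Finset.card_map,
      Nat.add_sub_add_right, Nat.succ_sub hE, sub_eq_add_neg, ← neg_mul, ← map_neg]
    congr 3
    · rw [map_mul, map_pow, map_neg, map_one]; ring
    · rw [pow_succ]; ring

end TwistedGroupAlgebra

namespace CoxeterSystem

variable {B W : Type*} [Group W] {M : CoxeterMatrix B} (cs : CoxeterSystem M W)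

theorem length_wordProd_mod_two (ω : List B) :
    cs.length (cs.wordProd ω) % 2 = ω.length % 2 := by
  induction ω with
  | nil => simp
  | cons i ω ih =>
    rw [wordProd_cons, length_mul_mod_two, length_simple, List.length_cons]
    omega

theorem neg_one_pow_length_sub_length {R : Type*} [Ring R] {ω ω' : List B}
    (hω : cs.IsReduced ω) (hω' : ω'.length ≤ ω.length) :
    (-1 : R) ^ (ω.length - ω'.length) =
      (-1) ^ (cs.length (cs.wordProd ω) - cs.length (cs.wordProd ω')) := by
  have hmod := cs.length_wordProd_mod_two ω'
  have hle := cs.length_wordProd_le ω'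
  rw [neg_one_pow_eq_pow_mod_two, neg_one_pow_eq_pow_mod_two (n := _ - _), hω.eq]
  congr 1
  omega

end CoxeterSystem

open Classical in
theorem pushpull_coefficient_formula_general
    {B W : Type*} [Group W] {M : CoxeterMatrix B} (cs : CoxeterSystem M W)
    {F Q Λ : Type*} [CommRing F] [CommRing Q] [Algebra F Q]
    [AddCommGroup Λ] [Module F Λ]
    (act : W →* RingAut Q) (ιΛ : Λ →ₗ[F] Q)
    (αroot : B → Λ)
    {A : Type*} [Ring A] [Module Q A]
    (ι : Q →+* A) (δ : W →* A)
    (hsmul : ∀ (q : Q) (a : A), q • a = ι q * a)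
    (hδι : ∀ (w : W) (q : Q), δ w * ι q = ι (act w q) * δ w)
    (bδ : Module.Basis W Q A) (hbδ : ∀ w, (bδ w : A) = δ w)
    (Y : W → A)
    (hY : ∀ l : List B, cs.IsReduced l →
      Y (cs.wordProd l) =
        (l.map (fun i =>
          ι (Ring.inverse (ιΛ (αroot i))) * (δ (cs.simple i) - δ 1))).prod)
    (c : W → W → Q) (hc : ∀ w v, c w v = bδ.repr (Y w) v)
    (w : W) (l : List B) (hl : cs.IsReduced l) (hlw : cs.wordProd l = w)
    (v : W) :
    c w v = (-1 : Q) ^ (cs.length w - cs.length v) *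
      ∑ E : Finset (Fin l.length),
        if cs.wordProd ((E.sort (· ≤ ·)).map l.get) = v
          then ∏ k : Fin l.length,
            Ring.inverse
              (act (cs.wordProd (((E.filter (fun j => j < k)).sort (· ≤ ·)).map l.get))
                (ιΛ (αroot (l.get k))))
          else 0 := by
  subst hlw
  have hrepr (q : Q) (u : W) : bδ.repr (ι q * δ u) v = if u = v then q else 0 := by
    rw [← hsmul, ← hbδ, map_smul, Module.Basis.repr_self, Finsupp.smul_apply,
      Finsupp.single_apply, smul_eq_mul, mul_ite, mul_one, mul_zero]
  have hword (E : Finset (Fin l.length)) :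
      E.sortedProd (fun k => cs.simple l[(k : ℕ)]) = cs.wordProd ((E.sort (· ≤ ·)).map l.get) := by
    simp only [Finset.sortedProd, CoxeterSystem.wordProd, List.map_map]
    rfl
  rw [hc, hY l hl, ← List.ofFn_getElem_eq_map, list_prod_ofFn_eq_sum_subsetWeight ι δ hδι,
    map_sum, Finset.sum_apply', Finset.mul_sum]
  refine Finset.sum_congr rfl fun E _ => ?_
  rw [hrepr, hword]
  split_ifs with hv
  · have hlen : ((E.sort (· ≤ ·)).map l.get).length ≤ l.length := by
      simpa using (Finset.card_le_univ E).trans_eq (Fintype.card_fin _)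
    rw [← hv, ← cs.neg_one_pow_length_sub_length hl hlen]
    simp only [subsetWeight, hword, RingEquiv.map_ringInverse, List.length_map, Finset.length_sort]
    rfl
  · rw [mul_zero]

open Classical in
/-- for a reduced word `w = s_{i_1} ⋯ s_{i_r}`, the coefficient
`c_{w,v}` in `Y_w = Σ_v c_{w,v} δ_v` equals `(−1)^{ℓ(w)−ℓ(v)}` times the sum,
over all subsequences `𝐣` of `(i_1, …, i_r)` whose product is `v` (not
necessarily reduced), of `∏_k β_{k,𝐣}⁻¹`, where `β_{k,𝐣}` is the image of
`α_{i_k}` under the product of the simple reflections of the entries of `𝐣`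
occurring strictly before position `k`. -/
theorem pushpull_coefficient_formula
    {B W : Type*} [Group W] {M : CoxeterMatrix B} (cs : CoxeterSystem M W)
    {F Q Λ : Type*} [CommRing F] [CommRing Q] [Algebra F Q]
    [AddCommGroup Λ] [Module F Λ]
    (act : W →* RingAut Q) (ιΛ : Λ →ₗ[F] Q)
    (αroot : B → Λ)
    (hαinv : ∀ (u : W) (i : B), IsUnit (act u (ιΛ (αroot i))))
    {A : Type*} [Ring A] [Module Q A]
    (ι : Q →+* A) (δ : W →* A)
    (hsmul : ∀ (q : Q) (a : A), q • a = ι q * a)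
    (hδι : ∀ (w : W) (q : Q), δ w * ι q = ι (act w q) * δ w)
    (bδ : Module.Basis W Q A) (hbδ : ∀ w, (bδ w : A) = δ w)
    (Y : W → A)
    (hY : ∀ l : List B, cs.IsReduced l →
      Y (cs.wordProd l) =
        (l.map (fun i =>
          ι (Ring.inverse (ιΛ (αroot i))) * (δ (cs.simple i) - δ 1))).prod)
    (c : W → W → Q) (hc : ∀ w v, c w v = bδ.repr (Y w) v)
    (w : W) (l : List B) (hl : cs.IsReduced l) (hlw : cs.wordProd l = w)
    (v : W) :
    c w v = (-1 : Q) ^ (cs.length w - cs.length v) *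
      ∑ E : Finset (Fin l.length),
        if cs.wordProd ((E.sort (· ≤ ·)).map l.get) = v
          then ∏ k : Fin l.length,
            Ring.inverse
              (act (cs.wordProd (((E.filter (fun j => j < k)).sort (· ≤ ·)).map l.get))
                (ιΛ (αroot (l.get k))))
          else 0 :=
  pushpull_coefficient_formula_general cs act ιΛ αroot ι δ hsmul hδι bδ hbδ Y hY c hc w l hl hlw v
end

section
/- Structure constants via localization: the Schubert product coefficients satisfy p_{u,v}^w = Σ_{x∈W} d_{u,x}·d_{v,x}·c_{w,x}; in particular p_{u,v}^v = d_{u,v}. -/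
/-! `ξ_u ξ_v` is multiplicative on the `δ`-basis, `ξ_u (δ_x) = d_{u,x}` and
`Y_w = Σ_x c_{w,x} δ_x`, so evaluating `ξ_u ξ_v = Σ_w p_{u,v}^w ξ_w` at `Y_w` gives the formula.
For the diagonal case, multiplying out a reduced word shows that `Y_w` is a unit multiple of `δ_w`
modulo the span of the `δ_x` with `ℓ(x) < ℓ(w)`. Both change-of-basis matrices are therefore
triangular for the length, with mutually inverse diagonals, so `d_{v,x} c_{v,x} = [x = v]` and
the sum collapses to `d_{u,v}`. -/

section LowerSpan

variable (R : Type*) {ι M : Type*} [Ring R] [AddCommGroup M] [Module R M]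

def lowerSpan (ℓ : ι → ℕ) (b : ι → M) (n : ℕ) : Submodule R M :=
  Submodule.span R (b '' {x | ℓ x < n})

variable {R} {ℓ : ι → ℕ}

theorem lowerSpan_mono (b : ι → M) : Monotone (lowerSpan R ℓ b) :=
  fun _ _ hmn => Submodule.span_mono <| Set.image_mono fun _ hx => lt_of_lt_of_le hx hmn

theorem mem_lowerSpan_of_lt (b : ι → M) {w : ι} {n : ℕ} (hw : ℓ w < n) :
    b w ∈ lowerSpan R ℓ b n :=
  Submodule.subset_span ⟨w, hw, rfl⟩

theorem lowerSpan_le_of_sub_smul_mem {b b' : ι → M} (q : ι → R)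
    (h : ∀ w, b' w - q w • b w ∈ lowerSpan R ℓ b (ℓ w)) (n : ℕ) :
    lowerSpan R ℓ b' n ≤ lowerSpan R ℓ b n := by
  refine Submodule.span_le.2 ?_
  rintro _ ⟨w, hw, rfl⟩
  rw [← sub_add_cancel (b' w) (q w • b w)]
  exact add_mem (lowerSpan_mono b (le_of_lt hw) (h w))
    (Submodule.smul_mem _ _ (mem_lowerSpan_of_lt b hw))

theorem lowerSpan_eq_of_sub_smul_mem {b b' : ι → M} (q : ι → Rˣ)
    (h : ∀ w, b' w - (q w : R) • b w ∈ lowerSpan R ℓ b (ℓ w)) (n : ℕ) :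
    lowerSpan R ℓ b n = lowerSpan R ℓ b' n := by
  refine le_antisymm ?_ (lowerSpan_le_of_sub_smul_mem _ h n)
  induction n using Nat.strong_induction_on with
  | _ n ih =>
    refine Submodule.span_le.2 ?_
    rintro _ ⟨w, hw, rfl⟩
    have hb : b w = ((q w)⁻¹ : Rˣ) • (b' w - (b' w - (q w : R) • b w)) := by
      rw [sub_sub_cancel, Units.smul_def, smul_smul, Units.inv_mul, one_smul]
    rw [hb]
    exact Submodule.smul_of_tower_mem _ _ <| sub_mem (mem_lowerSpan_of_lt b' hw)
      (lowerSpan_mono b' (le_of_lt hw) (ih _ hw (h w)))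

theorem sub_inv_smul_mem_lowerSpan {b b' : ι → M} (q : ι → Rˣ)
    (h : ∀ w, b' w - (q w : R) • b w ∈ lowerSpan R ℓ b (ℓ w)) (w : ι) :
    b w - (↑(q w)⁻¹ : R) • b' w ∈ lowerSpan R ℓ b' (ℓ w) := by
  have hb : b w - (↑(q w)⁻¹ : R) • b' w =
      -((↑(q w)⁻¹ : R) • (b' w - (q w : R) • b w)) := by
    rw [smul_sub, smul_smul, Units.inv_mul, one_smul, neg_sub]
  rw [hb, ← lowerSpan_eq_of_sub_smul_mem q h]
  exact neg_mem (Submodule.smul_mem _ _ (h w))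

theorem Module.Basis.repr_eq_of_sub_smul_mem_lowerSpan (b : Module.Basis ι R M) {m : M}
    {w : ι} {r : R} (h : m - r • b w ∈ lowerSpan R ℓ b (ℓ w)) (x : ι)
    (hx : ¬ ℓ x < ℓ w) :
    b.repr m x = Finsupp.single w r x := by
  have hlow : b.repr (m - r • b w) x = 0 :=
    Finsupp.notMem_support_iff.1 fun hmem => hx (b.repr_support_subset_of_mem_span _ h hmem)
  rw [map_sub, map_smul, Finsupp.sub_apply, sub_eq_zero] at hlow
  simpa using hlow

theorem Module.Basis.repr_mul_repr_of_sub_smul_mem_lowerSpan (e b : Module.Basis ι R M)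
    (q : ι → Rˣ) (h : ∀ w, b w - (q w : R) • e w ∈ lowerSpan R ℓ e (ℓ w)) (v x : ι) :
    b.repr (e x) v * e.repr (b v) x = Finsupp.single v 1 x := by
  have hb := e.repr_eq_of_sub_smul_mem_lowerSpan (h v)
  have he := b.repr_eq_of_sub_smul_mem_lowerSpan (sub_inv_smul_mem_lowerSpan q h x)
  rcases eq_or_ne v x with rfl | hvx
  · rw [hb v (lt_irrefl _), he v (lt_irrefl _), Finsupp.single_eq_same, Finsupp.single_eq_same,
      Finsupp.single_eq_same, Units.inv_mul]
  rw [Finsupp.single_eq_of_ne hvx.symm]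
  by_cases hlt : ℓ v < ℓ x
  · rw [hb x (not_lt_of_gt hlt), Finsupp.single_eq_of_ne hvx.symm, mul_zero]
  · rw [he v hlt, Finsupp.single_eq_of_ne hvx, zero_mul]

end LowerSpan

section TwistedGroupAlgebra

variable {W Q A : Type*} [Group W] [CommRing Q] [Ring A] [Module Q A]
  {ι : Q →+* A} {δ : W →* A}

theorem mul_mem_lowerSpan_succ (hsmul : ∀ (q : Q) (a : A), q • a = ι q * a) {s : W}
    {σ : Q → Q} (hσ : ∀ q, δ s * ι q = ι (σ q) * δ s) {ℓ : W → ℕ}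
    (hℓ : ∀ y, ℓ (s * y) ≤ ℓ y + 1) {n : ℕ} {m : A} (hm : m ∈ lowerSpan Q ℓ δ n) :
    δ s * m ∈ lowerSpan Q ℓ δ (n + 1) := by
  induction hm using Submodule.span_induction with
  | mem _ hy =>
    obtain ⟨y, hy, rfl⟩ := hy
    rw [← map_mul]
    exact mem_lowerSpan_of_lt δ (lt_of_le_of_lt (hℓ y) (Nat.succ_lt_succ hy))
  | zero => simp
  | add _ _ _ _ hx hy => rw [mul_add]; exact add_mem hx hy
  | smul q x _ hx =>
    rw [hsmul, ← mul_assoc, hσ, mul_assoc, ← hsmul]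
    exact Submodule.smul_mem _ _ hx

theorem CoxeterSystem.exists_prod_sub_smul_mem_lowerSpan {B : Type*} {M : CoxeterMatrix B}
    (cs : CoxeterSystem M W) (hsmul : ∀ (q : Q) (a : A), q • a = ι q * a)
    (σ : W → Q →+* Q) (hσ : ∀ x q, δ x * ι q = ι (σ x q) * δ x)
    (a : B → Q) (ha : ∀ i, IsUnit (a i)) (l : List B) :
    ∃ q : Qˣ, (l.map fun i => ι (a i) * (δ (cs.simple i) - δ 1)).prod -
      (q : Q) • δ (cs.wordProd l) ∈ lowerSpan Q cs.length δ l.length := by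
  induction l with
  | nil => exact ⟨1, by simp⟩
  | cons i t ih =>
    obtain ⟨q, hq⟩ := ih
    obtain ⟨r, hr, hP⟩ : ∃ r ∈ lowerSpan Q cs.length δ t.length,
        (t.map fun i => ι (a i) * (δ (cs.simple i) - δ 1)).prod =
          (q : Q) • δ (cs.wordProd t) + r :=
      ⟨_, hq, (add_sub_cancel _ _).symm⟩
    have hℓ : ∀ y, cs.length (cs.simple i * y) ≤ cs.length y + 1 := fun y => by
      have := cs.length_mul_le (cs.simple i) y
      rw [cs.length_simple] at this
      omega
    have hδq : δ (cs.simple i) * ((q : Q) • δ (cs.wordProd t)) =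
        σ (cs.simple i) q • δ (cs.simple i * cs.wordProd t) := by
      rw [hsmul, ← mul_assoc, hσ, mul_assoc, ← map_mul, ← hsmul]
    refine ⟨(ha i).unit * Units.map (σ (cs.simple i) : Q →* Q) q, ?_⟩
    have hexpand : ((i :: t).map fun i => ι (a i) * (δ (cs.simple i) - δ 1)).prod -
        (((ha i).unit * Units.map (σ (cs.simple i) : Q →* Q) q : Qˣ) : Q) •
          δ (cs.wordProd (i :: t)) =
        a i • (δ (cs.simple i) * r) - a i • ((q : Q) • δ (cs.wordProd t) + r) := by
      rw [List.map_cons, List.prod_cons, hP, cs.wordProd_cons, map_one, Units.val_mul,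
        IsUnit.unit_spec, Units.coe_map, MonoidHom.coe_coe, mul_smul, ← hδq]
      simp only [hsmul]
      noncomm_ring
    rw [hexpand, List.length_cons]
    have hwt : δ (cs.wordProd t) ∈ lowerSpan Q cs.length δ (t.length + 1) :=
      mem_lowerSpan_of_lt δ (Nat.lt_succ_of_le (cs.length_wordProd_le t))
    exact sub_mem (Submodule.smul_mem _ _ (mul_mem_lowerSpan_succ hsmul (hσ _) hℓ hr))
      (Submodule.smul_mem _ _ (add_mem (Submodule.smul_mem _ _ hwt)
        (lowerSpan_mono δ (Nat.le_succ _) hr)))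

end TwistedGroupAlgebra

open Classical in
/-- structure constants via localization: the Schubert structure
constants satisfy `p_{u,v}^w = Σ_{x ∈ W} d_{u,x} · d_{v,x} · c_{w,x}`; in
particular `p_{u,v}^v = d_{u,v}`. -/
theorem structure_constants_via_localization
    {B W : Type*} [Group W] [Fintype W] {M : CoxeterMatrix B}
    (cs : CoxeterSystem M W)
    {Q : Type*} [CommRing Q]
    (act : W →* RingAut Q)
    (αQ : B → Q) (hα : ∀ i, IsUnit (αQ i))
    {A : Type*} [Ring A] [Module Q A]
    (ι : Q →+* A) (δ : W →* A)
    (hsmul : ∀ (q : Q) (a : A), q • a = ι q * a)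
    (hδι : ∀ (x : W) (q : Q), δ x * ι q = ι (act x q) * δ x)
    (bδ : Module.Basis W Q A) (hbδ : ∀ x, (bδ x : A) = δ x)
    (Y : W → A)
    (hY : ∀ l : List B, cs.IsReduced l →
      Y (cs.wordProd l) =
        (l.map (fun i =>
          ι (Ring.inverse (αQ i)) * (δ (cs.simple i) - δ 1))).prod)
    (bY : Module.Basis W Q A) (hbY : ∀ x, (bY x : A) = Y x)
    (c : W → W → Q) (hc : ∀ w x, c w x = bδ.repr (Y w) x)
    (d : W → W → Q) (hd : ∀ u x, d u x = bY.repr (δ x) u)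
    (ξ : W → (A →ₗ[Q] Q))
    (hξ : ∀ u x : W, ξ u (Y x) = if u = x then 1 else 0)
    (mulD : (A →ₗ[Q] Q) → (A →ₗ[Q] Q) → (A →ₗ[Q] Q))
    (hmul : ∀ (f g : A →ₗ[Q] Q) (x : W), mulD f g (δ x) = f (δ x) * g (δ x))
    (p : W → W → W → Q)
    (hp : ∀ u v : W, mulD (ξ u) (ξ v) = ∑ w : W, p u v w • ξ w)
    (u v : W) :
    (∀ w : W, p u v w = ∑ x : W, d u x * d v x * c w x) ∧
    p u v v = d u v := by
  have hξ_coord : ∀ u, ξ u = bY.coord u := fun u =>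
    bY.ext fun x => by
      rw [Module.Basis.coord_apply, bY.repr_self, Finsupp.single_apply, hbY, hξ]
      exact if_congr eq_comm rfl rfl
  have hY_sum : ∀ w, Y w = ∑ x, c w x • δ x := fun w => by
    simpa [hc, hbδ] using (bδ.sum_repr (Y w)).symm
  have hp_eq : ∀ w, p u v w = ∑ x : W, d u x * d v x * c w x := fun w =>
    calc p u v w = mulD (ξ u) (ξ v) (Y w) := by simp [hp, hξ]
      _ = ∑ x : W, d u x * d v x * c w x := by
        simp [hY_sum, hmul, hd, hξ_coord, mul_comm]
  have hY_lead : ∀ w, ∃ q : Qˣ,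
      bY w - (q : Q) • bδ w ∈ lowerSpan Q cs.length bδ (cs.length w) := fun w => by
    obtain ⟨l, hl, rfl⟩ := cs.exists_isReduced w
    rw [hbY, hY l hl, hl, show ⇑bδ = δ from funext hbδ]
    exact cs.exists_prod_sub_smul_mem_lowerSpan hsmul (fun x => (act x : Q →+* Q)) hδι _
      (fun i => isUnit_ringInverse.2 (hα i)) l
  choose q hq using hY_lead
  have hdc : ∀ x, d v x * c v x = Finsupp.single v 1 x := fun x => by
    simpa [hd, hc, hbδ, hbY] using bδ.repr_mul_repr_of_sub_smul_mem_lowerSpan bY q hq v x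
  refine ⟨hp_eq, ?_⟩
  simp [hp_eq, mul_assoc, hdc, Finsupp.single_apply]
end

section
/- In the connective Hecke ring, the elements X_i := (1/x_{α_i})(δ_e − δ_{s_i}) satisfy X_i² = t·X_i, using the identity 1/x_{α_i} + 1/x_{−α_i} = t that holds in the localized connective group ring. -/
/-- in the connective Hecke ring (inside the twisted group algebra
`𝒬_W` of the localized connective group ring `𝒬`), the element
`X_i = (1/x_{α_i})(δ_e − δ_{s_i})` satisfies `X_i² = t · X_i`, using the
identity `1/x_{α_i} + 1/x_{−α_i} = t`, which follows from the connective group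
ring relation `x_{α} + x_{−α} = t · x_{α} x_{−α}`. -/
theorem connective_hecke_idempotent_relation
    {W : Type*} [Group W]
    {𝒬 : Type*} [CommRing 𝒬]
    (act : W →* RingAut 𝒬)
    (tQ xα xneg : 𝒬)                 -- t, x_{α_i} and x_{−α_i}
    (hxα : IsUnit xα) (hxneg : IsUnit xneg)
    (hrel : xα + xneg = tQ * (xα * xneg))   -- the connective group ring relation
    (si : W) (hsi : si * si = 1)            -- the simple reflection
    (hact : act si xα = xneg)               -- s_i(x_{α_i}) = x_{−α_i}
    {A : Type*} [Ring A]
    (ι : 𝒬 →+* A) (δ : W →* A)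
    (hδι : ∀ (w : W) (q : 𝒬), δ w * ι q = ι (act w q) * δ w) :
    (ι (Ring.inverse xα) * (δ 1 - δ si)) * (ι (Ring.inverse xα) * (δ 1 - δ si))
      = ι tQ * (ι (Ring.inverse xα) * (δ 1 - δ si)) := by
  set a := Ring.inverse xα with ha
  set b := Ring.inverse xneg with hb
  have hxa : xα * a = 1 := Ring.mul_inverse_cancel _ hxα
  have hxb : xneg * b = 1 := Ring.mul_inverse_cancel _ hxneg
  -- 1/xα + 1/x₋α = t
  have hsum : a + b = tQ := by
    have : (xα + xneg) * (a * b) = (tQ * (xα * xneg)) * (a * b) := by rw [hrel]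
    have h2 : (xα + xneg) * (a * b) = b + a := by
      calc (xα + xneg) * (a * b) = (xα * a) * b + (xneg * b) * a := by ring
        _ = b + a := by rw [hxa, hxb, one_mul, one_mul]
    have h3 : (tQ * (xα * xneg)) * (a * b) = tQ := by
      calc (tQ * (xα * xneg)) * (a * b) = tQ * ((xα * a) * (xneg * b)) := by ring
        _ = tQ := by rw [hxa, hxb, one_mul, mul_one]
    rw [h2, h3] at this
    rw [← this]; ring
  -- act si a = b
  have hacta : act si a = b := by
    have h1 : xneg * act si a = 1 := by
      have := congrArg (act si) hxa
      rw [map_mul, hact, map_one] at this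
      exact this
    have := congrArg (b * ·) h1
    simp only [mul_one] at this
    rw [← mul_assoc, mul_comm b xneg, hxb, one_mul] at this
    exact this
  have hdu : δ si * ι a = ι b * δ si := by rw [hδι, hacta]
  have hdd : δ si * δ si = 1 := by rw [← map_mul, hsi, map_one]
  rw [map_one δ]
  set u := ι a
  set v := ι b
  set d := δ si
  have h1 : (1 - d) * (u * (1 - d)) = u + v - (u + v) * d := by
    have hdud : d * (u * (1 - d)) = v * d * (1 - d) := by rw [← mul_assoc, hdu]
    calc (1 - d) * (u * (1 - d)) = u * (1 - d) - v * d * (1 - d) := by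
          rw [sub_mul, one_mul, hdud]
      _ = u - u * d - v * d + v * (d * d) := by noncomm_ring
      _ = u + v - (u + v) * d := by rw [hdd, mul_one]; noncomm_ring
  have hc : u * ι tQ = ι tQ * u := by rw [← map_mul, ← map_mul, mul_comm]
  calc (u * (1 - d)) * (u * (1 - d)) = u * ((1 - d) * (u * (1 - d))) := by
        rw [mul_assoc]
    _ = u * (ι tQ - ι tQ * d) := by rw [h1, ← map_add, hsum]
    _ = (u * ι tQ) * (1 - d) := by noncomm_ring
    _ = ι tQ * (u * (1 - d)) := by rw [hc, mul_assoc]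
end
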